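/- arXiv:1408.5488 — 6 statements merged into one kernel-verified Lean document; each statement's English description precedes it below -/
import Mathlib

section
/- For every t ≥ 1, there exists an independent set C in the hypercube Q_{2^t−1} such that every vertex not in C has exactly one neighbour in C. -/
open SimpleGraph Finset

def cube (d : ℕ) : SimpleGraph (Fin d → ZMod 2) :=
  SimpleGraph.fromRel (fun u v => ∃ i, u i ≠ v i ∧ ∀ j, j ≠ i → u j = v j)

def grid (k d : ℕ) : SimpleGraph (Fin d → Fin k) :=
  SimpleGraph.fromRel (fun u v => ∃ i, ((u i : ℕ)) + 1 = (v i : ℕ) ∧ ∀ j, j ≠ i → u j = v j)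

def CopyAt {α β : Type*} (H : SimpleGraph α) (G : SimpleGraph β) (u v : β) : Prop :=
  ∃ f : α → β, Function.Injective f ∧ (∀ ⦃a b⦄, H.Adj a b → G.Adj (f a) (f b)) ∧
    ∃ a b, H.Adj a b ∧ f a = u ∧ f b = v

def ContainsCopy {α β : Type*} (H : SimpleGraph α) (G : SimpleGraph β) : Prop :=
  ∃ f : α → β, Function.Injective f ∧ ∀ ⦃a b⦄, H.Adj a b → G.Adj (f a) (f b)

def WeaklySaturated {α β : Type*} (F G : SimpleGraph β) (H : SimpleGraph α) : Prop :=
  G ≤ F ∧ ∃ (n : ℕ) (seq : ℕ → SimpleGraph β), seq 0 = G ∧ seq n = F ∧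
    ∀ i < n, ∃ u v : β, ¬ (seq i).Adj u v ∧ F.Adj u v ∧
      seq (i + 1) = seq i ⊔ SimpleGraph.fromEdgeSet {s(u, v)} ∧
      CopyAt H (seq (i + 1)) u v

noncomputable def wsatNum {α β : Type*} (F : SimpleGraph β) (H : SimpleGraph α) : ℕ :=
  sInf {n | ∃ G, WeaklySaturated F G H ∧ G.edgeSet.ncard = n}

def Saturated {α β : Type*} (F G : SimpleGraph β) (H : SimpleGraph α) : Prop :=
  G ≤ F ∧ ¬ ContainsCopy H G ∧ ∀ u v : β, F.Adj u v → ¬ G.Adj u v →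
    ContainsCopy H (G ⊔ SimpleGraph.fromEdgeSet {s(u, v)})

noncomputable def satNum {α β : Type*} (F : SimpleGraph β) (H : SimpleGraph α) : ℕ :=
  sInf {n | ∃ G, Saturated F G H ∧ G.edgeSet.ncard = n}

lemma zmod2_add_self : ∀ x : ZMod 2, x + x = 0 := by decide

lemma zmod2_ne_iff : ∀ a b : ZMod 2, a ≠ b ↔ b = a + 1 := by decide

lemma zmod2_ne_iff' : ∀ a b : ZMod 2, a ≠ b ↔ a = b + 1 := by decide

lemma zmod2_eq_of_add : ∀ a b : ZMod 2, a + b = 0 → b = a := by decide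

lemma cube_adj_iff {d : ℕ} (u v : Fin d → ZMod 2) :
    (cube d).Adj u v ↔ ∃ i, v = u + Pi.single i 1 := by
  constructor
  · rintro ⟨hne, h | h⟩
    · obtain ⟨i, hi, hj⟩ := h
      refine ⟨i, funext fun j => ?_⟩
      by_cases hji : j = i
      · subst hji
        simp only [Pi.add_apply, Pi.single_eq_same]
        exact (zmod2_ne_iff _ _).mp hi
      · simp [Pi.single_eq_of_ne hji, hj j hji]
    · obtain ⟨i, hi, hj⟩ := h
      refine ⟨i, funext fun j => ?_⟩
      by_cases hji : j = i
      · subst hji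
        simp only [Pi.add_apply, Pi.single_eq_same]
        exact (zmod2_ne_iff' _ _).mp hi
      · simp [Pi.single_eq_of_ne hji, (hj j hji).symm]
  · rintro ⟨i, rfl⟩
    refine ⟨?_, Or.inl ⟨i, ?_, fun j hj => by simp [Pi.single_eq_of_ne hj]⟩⟩
    · intro h
      have := congrFun h i
      simp only [Pi.add_apply, Pi.single_eq_same] at this
      have : (u i : ZMod 2) ≠ u i + 1 := by
        rw [zmod2_ne_iff]
      exact this ‹_›
    · simp only [Pi.add_apply, Pi.single_eq_same]
      rw [zmod2_ne_iff]

theorem stmt_2 (t : ℕ) (ht : 1 ≤ t) :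
    ∃ C : Set (Fin (2 ^ t - 1) → ZMod 2),
      (∀ u ∈ C, ∀ v ∈ C, ¬ (cube (2 ^ t - 1)).Adj u v) ∧
      (∀ v ∉ C, ∃! c, c ∈ C ∧ (cube (2 ^ t - 1)).Adj v c) := by
  classical
  have hcard : Fintype.card {x : Fin t → ZMod 2 // x ≠ 0} = 2 ^ t - 1 := by
    rw [Fintype.card_subtype_compl]
    simp [Fintype.card_fun]
  let e : Fin (2 ^ t - 1) ≃ {x : Fin t → ZMod 2 // x ≠ 0} :=
    (Fintype.equivFinOfCardEq hcard).symm
  let σ : (Fin (2 ^ t - 1) → ZMod 2) → (Fin t → ZMod 2) :=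
    fun v => ∑ i, v i • (e i).val
  have hσ : ∀ (v : Fin (2 ^ t - 1) → ZMod 2) (i),
      σ (v + Pi.single i 1) = σ v + (e i).val := by
    intro v i
    have : σ (v + Pi.single i 1) = σ v + ∑ j, (Pi.single i 1 : Fin (2^t-1) → ZMod 2) j • (e j).val := by
      simp only [σ, Pi.add_apply, add_smul, Finset.sum_add_distrib]
    rw [this]
    congr 1
    rw [Finset.sum_eq_single i]
    · simp
    · intro j _ hj; simp [Pi.single_eq_of_ne hj]
    · simp
  refine ⟨{v | σ v = 0}, ?_, ?_⟩
  · intro u hu v hv hadj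
    obtain ⟨i, rfl⟩ := (cube_adj_iff u v).mp hadj
    have := hσ u i
    rw [hv, hu, zero_add] at this
    exact (e i).2 this.symm
  · intro v hv
    have hv' : σ v ≠ 0 := hv
    set i := e.symm ⟨σ v, hv'⟩ with hi
    have hei : (e i).val = σ v := by rw [hi, e.apply_symm_apply]
    refine ⟨v + Pi.single i 1, ⟨?_, ?_⟩, ?_⟩
    · show σ _ = 0
      rw [hσ, hei]
      funext j
      exact zmod2_add_self _
    · exact (cube_adj_iff v _).mpr ⟨i, rfl⟩
    · rintro c ⟨hc, hadj⟩
      obtain ⟨j, rfl⟩ := (cube_adj_iff v c).mp hadj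
      have := hσ v j
      rw [hc] at this
      have hej : (e j).val = σ v := by
        have h0 : σ v + (e j).val = 0 := by rw [← hσ v j]; exact hc
        funext k
        exact zmod2_eq_of_add _ _ (congrFun h0 k)
      have : j = i := by
        rw [hi]
        apply_fun e
        rw [e.apply_symm_apply]
        exact Subtype.ext hej
      rw [this]
end

section
/- Let F be a graph, H a collection of subgraphs of F, and W a vector space. Suppose there is an assignment e ↦ f_e ∈ W for e ∈ E(F) such that for every H ∈ H there exist nonzero scalars {c_e : e ∈ E(H)} with Σ_{e∈E(H)} c_e f_e = 0. Then any weakly (F,H)-saturated graph G satisfies |E(G)| ≥ dim(span{f_e : e ∈ E(F)}). -/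
open SimpleGraph Finset

theorem stmt_3 {β : Type*} [Fintype β] (F : SimpleGraph β) (ℋ : Set F.Subgraph)
    {K : Type*} [Field K] {W : Type*} [AddCommGroup W] [Module K W]
    (f : Sym2 β → W)
    (hdep : ∀ H ∈ ℋ, ∃ c : Sym2 β → K, (∀ e ∈ H.edgeSet, c e ≠ 0) ∧
      ∑ᶠ e ∈ H.edgeSet, c e • f e = 0)
    (G : SimpleGraph β)
    (hG : G ≤ F ∧ ∃ (n : ℕ) (seq : ℕ → SimpleGraph β), seq 0 = G ∧ seq n = F ∧
      ∀ i < n, ∃ u v : β, ¬ (seq i).Adj u v ∧ F.Adj u v ∧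
        seq (i + 1) = seq i ⊔ SimpleGraph.fromEdgeSet {s(u, v)} ∧
        ∃ H ∈ ℋ, H.spanningCoe ≤ seq (i + 1) ∧ H.Adj u v) :
    Module.finrank K (Submodule.span K (f '' F.edgeSet)) ≤ G.edgeSet.ncard := by
  classical
  obtain ⟨hGF, n, seq, h0, hn, hstep⟩ := hG
  set S : Submodule K W := Submodule.span K (f '' G.edgeSet) with hS
  have key : ∀ i ≤ n, f '' (seq i).edgeSet ⊆ S := by
    intro i
    induction i with
    | zero =>
      intro _
      rw [h0]
      exact Submodule.subset_span
    | succ i ih =>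
      intro hin
      have hin' : i < n := Nat.lt_of_succ_le hin
      have ihS := ih (le_of_lt hin')
      obtain ⟨u, v, hnadj, hFadj, hseq, H, hHℋ, hHle, hHuv⟩ := hstep i hin'
      have hedges : (seq (i+1)).edgeSet = (seq i).edgeSet ∪ {s(u,v)} := by
        rw [hseq, SimpleGraph.edgeSet_sup, SimpleGraph.edgeSet_fromEdgeSet]
        congr 1
        ext e
        simp only [Set.mem_diff, Set.mem_singleton_iff, Set.mem_setOf_eq]
        constructor
        · exact fun h => h.1
        · rintro rfl
          exact ⟨rfl, by simp [hFadj.ne]⟩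
      -- edges of H lie in seq (i+1)
      have hHsub : H.edgeSet ⊆ (seq (i+1)).edgeSet := by
        intro e he
        induction e with
        | h a b =>
          exact hHle (SimpleGraph.Subgraph.mem_edgeSet.mp he)
      have huvmem : s(u,v) ∈ H.edgeSet := SimpleGraph.Subgraph.mem_edgeSet.mpr hHuv
      obtain ⟨c, hc0, hcsum⟩ := hdep H hHℋ
      have hfin : H.edgeSet.Finite := Set.toFinite _
      rw [finsum_mem_eq_finite_toFinset_sum _ hfin] at hcsum
      set T := hfin.toFinset with hT
      have huvT : s(u,v) ∈ T := hfin.mem_toFinset.mpr huvmem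
      have hsplit : c s(u,v) • f s(u,v) + ∑ e ∈ T.erase s(u,v), c e • f e = 0 := by
        exact (Finset.add_sum_erase T (fun e => c e • f e) huvT).trans hcsum
      have hrest : ∑ e ∈ T.erase s(u,v), c e • f e ∈ S := by
        refine Submodule.sum_mem _ (fun e he => ?_)
        have heT : e ∈ (seq i).edgeSet := by
          have : e ∈ (seq (i+1)).edgeSet := hHsub (hfin.mem_toFinset.mp (Finset.mem_of_mem_erase he))
          rw [hedges] at this
          rcases this with h | h
          · exact h
          · exact absurd h (Finset.ne_of_mem_erase he)
        exact Submodule.smul_mem _ _ (ihS ⟨e, heT, rfl⟩)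
      have hfuv : f s(u,v) ∈ S := by
        have hcne : c s(u,v) ≠ 0 := hc0 _ huvmem
        have : c s(u,v) • f s(u,v) = -∑ e ∈ T.erase s(u,v), c e • f e := by
          exact eq_neg_of_add_eq_zero_left hsplit
        have h2 : f s(u,v) = (c s(u,v))⁻¹ • (-∑ e ∈ T.erase s(u,v), c e • f e) := by
          rw [← this, smul_smul, inv_mul_cancel₀ hcne, one_smul]
        rw [h2]
        exact Submodule.smul_mem _ _ (Submodule.neg_mem _ hrest)
      rintro w ⟨e, he, rfl⟩
      rw [hedges] at he
      rcases he with h | h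
      · exact ihS ⟨e, h, rfl⟩
      · rw [h]; exact hfuv
  have hFsub : f '' F.edgeSet ⊆ S := by
    rw [← hn]
    exact key n le_rfl
  have hGfin : G.edgeSet.Finite := Set.toFinite _
  have hspan_le : Submodule.span K (f '' F.edgeSet) ≤ S := Submodule.span_le.mpr hFsub
  haveI : FiniteDimensional K S := by
    rw [hS]
    exact FiniteDimensional.span_of_finite K (hGfin.image f)
  calc Module.finrank K (Submodule.span K (f '' F.edgeSet))
      ≤ Module.finrank K S := Submodule.finrank_mono hspan_le
    _ ≤ (f '' G.edgeSet).ncard := by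
        haveI : Fintype (f '' G.edgeSet) := (hGfin.image f).fintype
        rw [hS, Set.ncard_eq_toFinset_card']
        exact finrank_span_le_card _
    _ ≤ G.edgeSet.ncard := Set.ncard_image_le hGfin
end

section
/- For all d ≥ m ≥ 1, wsat(Q_d, Q_m) ≥ (m−1)·2^d − Σ_{j=0}^{m−2} (m−1−j)·C(d,j). -/
open SimpleGraph Finset

/-!
Linear-algebra method. Fix `r = m - 1` and points `z i = (1, i, …, i^(r-1))` on the moment curve
in `ℝ^r`: any `r` of them are linearly independent, and any `r + 1` satisfy a linear relation with
all coefficients nonzero. Send an edge `uv` of `Q_d` in direction `i` to `(𝟙_u + 𝟙_v) ⊗ z i`.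

An injective homomorphism `Q_m → Q_d` maps each coordinate direction of `Q_m` to a single
direction of `Q_d`, since opposite sides of a 4-cycle in `Q_d` are parallel. Weighting the edges of
the copy by a relation among the `z` of its `m` directions makes the sum of their vectors vanish at
every vertex, so the vector of the edge added at each step of a weakly saturating process lies in
the span of the earlier ones. Hence a weakly saturated graph has at least as many edges as the
dimension of the span of all edge vectors.

For every vertex `u` pick `min(r, |u|)` edges from `u` down to `u - e_i`; ordered by weight, this
family is block triangular, hence independent, and `∑_u min(r, |u|)` is the stated bound.
-/

section LinearAlgebra

open Submodule

variable {K M : Type*} [Field K] [AddCommGroup M] [Module K M]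

theorem mem_span_of_sum_smul_eq_zero {ι : Type*} {s : Finset ι} {c : ι → K} {v : ι → M}
    {x : M} {S : Set M} (P : ι → Prop) [DecidablePred P] (hsum : ∑ i ∈ s, c i • v i = 0)
    (hP : ∀ i ∈ s, P i → v i = x) (hnP : ∀ i ∈ s, ¬ P i → v i ∈ span K S)
    (hc : ∑ i ∈ s with P i, c i ≠ 0) : x ∈ span K S := by
  have h : (∑ i ∈ s with P i, c i) • (span K S).mkQ x = 0 := by
    have hq := congrArg (span K S).mkQ hsum
    rw [map_sum, map_zero] at hq
    rw [Finset.sum_smul, Finset.sum_filter]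
    refine (Finset.sum_congr rfl fun i hi => ?_).trans hq
    split_ifs with hi'
    · rw [map_smul, hP i hi hi']
    · rw [map_smul, mkQ_apply, (Quotient.mk_eq_zero _).mpr (hnP i hi hi'), smul_zero]
  exact (Quotient.mk_eq_zero _).mp ((smul_eq_zero.mp h).resolve_left hc)

theorem exists_forall_ne_zero_sum_smul_eq_zero [FiniteDimensional K M] {ι : Type*} [Fintype ι]
    {v : ι → M} (hcard : Module.finrank K M < Fintype.card ι)
    (hv : ∀ i, LinearIndependent K fun j : {j // j ≠ i} => v j.1) :
    ∃ c : ι → K, (∀ i, c i ≠ 0) ∧ ∑ i, c i • v i = 0 := by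
  classical
  obtain ⟨c, hsum, i₀, hi₀⟩ := Fintype.not_linearIndependent_iff.mp
    fun h => hcard.not_ge h.fintype_card_le_finrank
  refine ⟨c, fun i hi => hi₀ ?_, hsum⟩
  have hsum' : ∑ j : {j // j ≠ i}, c j • v j.1 = 0 := by
    rw [← hsum, Fintype.sum_eq_add_sum_subtype_ne _ i, hi, zero_smul, zero_add]
  by_cases h : i₀ = i
  · exact h ▸ hi
  · exact Fintype.linearIndependent_iff.mp (hv i) (fun j => c j) hsum' ⟨i₀, h⟩

theorem linearIndependent_sigma_of_triangular {X : Type*} [Fintype X] [DecidableEq X]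
    {κ : X → Type*} [∀ x, Fintype (κ x)] {N : Type*} [AddCommGroup N] [Module K N]
    (w : X → ℕ) (v : (Σ x, κ x) → X → N)
    (hdiag : ∀ x, LinearIndependent K fun i : κ x => v ⟨x, i⟩ x)
    (hlow : ∀ x y (i : κ y), y ≠ x → w y ≤ w x → v ⟨y, i⟩ x = 0) :
    LinearIndependent K v := by
  classical
  rw [Fintype.linearIndependent_iff]
  intro c hsum
  by_contra! hne
  -- Evaluate at the base point of a nonzero coefficient of maximal weight.
  obtain ⟨p, hp, hmax⟩ := Finset.exists_max_image (univ.filter fun p => c p ≠ 0) (fun p => w p.1)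
    (by simpa [Finset.filter_nonempty_iff] using hne)
  have hp : c p ≠ 0 := (Finset.mem_filter.mp hp).2
  have hx : ∑ i : κ p.1, c ⟨p.1, i⟩ • v ⟨p.1, i⟩ p.1 = 0 := by
    have := congrFun hsum p.1
    rw [Finset.sum_apply, Fintype.sum_sigma, Finset.sum_eq_single p.1] at this
    · simpa using this
    · intro y _ hy
      refine Finset.sum_eq_zero fun i _ => ?_
      by_cases hci : c ⟨y, i⟩ = 0
      · simp [hci]
      · simp [hlow p.1 y i hy (hmax ⟨y, i⟩ (by simpa using hci))]
    · simp
  exact hp (Fintype.linearIndependent_iff.mp (hdiag p.1) _ hx p.2)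

end LinearAlgebra

section MomentCurve

variable {K : Type*} [Field K]

def momentCurve (r : ℕ) (x : K) : Fin r → K := fun t => x ^ (t : ℕ)

theorem linearIndependent_momentCurve {r : ℕ} {ι : Type*} [Fintype ι] {x : ι → K}
    (hx : Function.Injective x) (hcard : Fintype.card ι ≤ r) :
    LinearIndependent K fun i => momentCurve r (x i) := by
  rw [Fintype.linearIndependent_iff]
  intro c hsum i
  let e := Fintype.equivFin ι
  have h := Matrix.eq_zero_of_forall_pow_sum_mul_pow_eq_zero (f := x ∘ e.symm) (v := c ∘ e.symm)
    (hx.comp e.symm.injective) fun t => by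
      have := congrFun hsum (Fin.castLE hcard t)
      rw [Finset.sum_apply] at this
      simpa [momentCurve, ← e.symm.sum_comp] using this
  simpa using congrFun h (e i)

variable [CharZero K] {d r : ℕ}

theorem linearIndependent_momentCurve_of_card_le {S : Finset (Fin d)} (hS : S.card ≤ r) :
    LinearIndependent K fun i : S => momentCurve r (((i : Fin d) : ℕ) : K) :=
  linearIndependent_momentCurve
    ((Nat.cast_injective.comp Fin.val_injective).comp Subtype.val_injective) (by simpa using hS)

theorem exists_forall_ne_zero_sum_smul_momentCurve_eq_zero {σ : Fin (r + 1) → Fin d}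
    (hσ : Function.Injective σ) :
    ∃ c : Fin (r + 1) → K, (∀ t, c t ≠ 0) ∧ ∑ t, c t • momentCurve r ((σ t : ℕ) : K) = 0 :=
  exists_forall_ne_zero_sum_smul_eq_zero (by simp) fun t =>
    linearIndependent_momentCurve ((Nat.cast_injective.comp Fin.val_injective).comp
      (hσ.comp Subtype.val_injective)) (by simp)

end MomentCurve

section WeakSaturation

open Submodule

variable {α β K M : Type*} [Field K] [AddCommGroup M] [Module K M]
  {F G : SimpleGraph β} {H : SimpleGraph α}

theorem weaklySaturated_self : WeaklySaturated F F H :=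
  ⟨le_rfl, 0, fun _ => F, rfl, rfl, fun _ h => absurd h (Nat.not_lt_zero _)⟩

theorem WeaklySaturated.span_image_edgeSet_le (φ : Sym2 β → M)
    (hφ : ∀ Γ ≤ F, ∀ u v, F.Adj u v → CopyAt H (Γ ⊔ edge u v) u v →
      φ s(u, v) ∈ span K (φ '' Γ.edgeSet))
    (h : WeaklySaturated F G H) : span K (φ '' F.edgeSet) ≤ span K (φ '' G.edgeSet) := by
  obtain ⟨hGF, n, seq, h0, hn, hstep⟩ := h
  suffices ∀ i ≤ n, seq i ≤ F ∧ span K (φ '' (seq i).edgeSet) ≤ span K (φ '' G.edgeSet) from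
    hn ▸ (this n le_rfl).2
  intro i
  induction i with
  | zero => exact fun _ => by rw [h0]; exact ⟨hGF, le_rfl⟩
  | succ i ih =>
    intro hi
    obtain ⟨hle, hspan⟩ := ih (by omega)
    obtain ⟨u, v, -, huv, hseq, hcopy⟩ := hstep i (by omega)
    have hnew := hφ _ hle u v huv (hseq ▸ hcopy)
    rw [hseq]
    refine ⟨sup_le hle ((edge_le_iff F).mpr (Or.inr huv)), ?_⟩
    rw [edgeSet_sup, Set.image_union, span_union, sup_le_iff]
    refine ⟨hspan, span_le.mpr ?_⟩
    rintro _ ⟨e, he, rfl⟩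
    rw [Set.mem_singleton_iff.mp (edgeSet_edge_subset he)]
    exact hspan hnew

theorem finrank_span_image_edgeSet_le_wsatNum [Finite β] (φ : Sym2 β → M)
    (hφ : ∀ Γ ≤ F, ∀ u v, F.Adj u v → CopyAt H (Γ ⊔ edge u v) u v →
      φ s(u, v) ∈ span K (φ '' Γ.edgeSet)) :
    Module.finrank K (span K (φ '' F.edgeSet)) ≤ wsatNum F H := by
  refine le_csInf ⟨_, F, weaklySaturated_self, rfl⟩ ?_
  rintro _ ⟨G, hG, rfl⟩
  classical
  cases nonempty_fintype β
  have : Module.Finite K (span K (φ '' G.edgeSet)) :=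
    Module.Finite.span_of_finite K (Set.toFinite _)
  calc Module.finrank K (span K (φ '' F.edgeSet))
      ≤ Module.finrank K (span K (φ '' G.edgeSet)) :=
        Submodule.finrank_mono (hG.span_image_edgeSet_le φ hφ)
    _ ≤ (φ '' G.edgeSet).toFinset.card := finrank_span_le_card _
    _ = (φ '' G.edgeSet).ncard := (Set.ncard_eq_toFinset_card' _).symm
    _ ≤ G.edgeSet.ncard := Set.ncard_image_le (Set.toFinite _)

end WeakSaturation

namespace Hypercube

open Submodule

section Cube

variable {ι : Type*} [DecidableEq ι] {d m : ℕ}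

theorem single_one_left_injective :
    Function.Injective fun i : ι => (Pi.single i 1 : ι → ZMod 2) := by
  intro i j h
  by_contra hij
  simpa [Pi.single_apply, hij] using congrFun h i

theorem single_add_single_eq_zero_iff {i j : ι} :
    (Pi.single i 1 + Pi.single j 1 : ι → ZMod 2) = 0 ↔ i = j := by
  rw [add_eq_zero_iff_eq_neg, ZModModule.neg_eq_self]
  exact single_one_left_injective.eq_iff

theorem eq_of_single_add_single_eq {i j k l : ι}
    (h : (Pi.single i 1 + Pi.single j 1 : ι → ZMod 2) = Pi.single k 1 + Pi.single l 1)
    (hij : i ≠ j) (hik : i ≠ k) : j = k := by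
  have hli : l = i := by
    by_contra hli
    simpa [Pi.single_apply, hij.symm, hik.symm, hli] using congrFun h i
  subst hli
  exact single_one_left_injective (add_left_cancel (h.trans (add_comm _ _)))

theorem apply_add_eq_of_forall_apply_add_single [Finite ι] {X : Type*}
    {h : (ι → ZMod 2) → X} (hh : ∀ a i, h (a + Pi.single i 1) = h a) (a b : ι → ZMod 2) :
    h (a + b) = h a := by
  induction b using Pi.single_induction generalizing a with
  | zero => rw [add_zero]
  | add b c hb hc => rw [← add_assoc, hc, hb]
  | single i x =>
    obtain rfl | rfl : x = 0 ∨ x = 1 := by revert x; decide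
    · rw [Pi.single_zero, add_zero]
    · exact hh a i

theorem cube_adj_iff {u v : Fin d → ZMod 2} : (cube d).Adj u v ↔ ∃ i, v = u + Pi.single i 1 := by
  have hrel : ∀ (u v : Fin d → ZMod 2) i,
      (u i ≠ v i ∧ ∀ j, j ≠ i → u j = v j) ↔ v = u + Pi.single i 1 := by
    intro u v i
    simp only [funext_iff, Pi.add_apply, Pi.single_apply]
    refine ⟨fun ⟨hi, hj⟩ j => ?_, fun h => ⟨?_, fun j hj => by simpa [hj] using (h j).symm⟩⟩
    · split_ifs with hji
      · subst hji
        revert hi; generalize u j = x; generalize v j = y; revert x y; decide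
      · simpa using (hj j hji).symm
    · rw [h i, if_pos rfl]
      generalize u i = x; revert x; decide
  simp only [cube, fromRel_adj, hrel]
  constructor
  · rintro ⟨-, ⟨i, rfl⟩ | ⟨i, rfl⟩⟩
    · exact ⟨i, rfl⟩
    · exact ⟨i, by rw [add_assoc, ZModModule.add_self, add_zero]⟩
  · rintro ⟨i, rfl⟩
    refine ⟨fun h => ?_, Or.inl ⟨i, rfl⟩⟩
    simpa using congrFun h i

theorem cube_adj_add_single (u : Fin d → ZMod 2) (i : Fin d) :
    (cube d).Adj u (u + Pi.single i 1) :=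
  cube_adj_iff.mpr ⟨i, rfl⟩

-- Opposite sides of a 4-cycle in `Q_d` are parallel.
theorem dir_add_single_eq {f : (Fin m → ZMod 2) → Fin d → ZMod 2} (hf : Function.Injective f)
    {δ : (Fin m → ZMod 2) → Fin m → Fin d}
    (hδ : ∀ a t, f (a + Pi.single t 1) = f a + Pi.single (δ a t) 1) (a : Fin m → ZMod 2)
    (s t : Fin m) : δ (a + Pi.single s 1) t = δ a t := by
  by_cases hst : s = t
  · subst hst
    have h := hδ (a + Pi.single s 1) s
    rw [add_assoc, ZModModule.add_self, add_zero, hδ a s, add_assoc] at h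
    exact (single_add_single_eq_zero_iff.mp (left_eq_add.mp h)).symm
  · have h₁ : f (a + Pi.single s 1 + Pi.single t 1) =
        f a + (Pi.single (δ a s) 1 + Pi.single (δ (a + Pi.single s 1) t) 1) := by
      rw [hδ, hδ, add_assoc]
    have h₂ : f (a + Pi.single s 1 + Pi.single t 1) =
        f a + (Pi.single (δ a t) 1 + Pi.single (δ (a + Pi.single t 1) s) 1) := by
      rw [add_right_comm, hδ, hδ, add_assoc]
    refine eq_of_single_add_single_eq (add_left_cancel (h₁.symm.trans h₂)) (fun h => ?_) fun h => ?_
    · rw [← h, ZModModule.add_self, add_zero, add_assoc] at h₁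
      exact hst (single_add_single_eq_zero_iff.mp (add_eq_left.mp (hf h₁)))
    · have := hf ((hδ a s).trans (h ▸ (hδ a t).symm))
      exact hst (single_one_left_injective (add_left_cancel this))

theorem exists_injective_apply_add_single_eq {f : (Fin m → ZMod 2) → Fin d → ZMod 2}
    (hf : Function.Injective f) (hom : ∀ ⦃a b⦄, (cube m).Adj a b → (cube d).Adj (f a) (f b)) :
    ∃ σ : Fin m → Fin d, Function.Injective σ ∧
      ∀ a t, f (a + Pi.single t 1) = f a + Pi.single (σ t) 1 := by
  choose δ hδ using fun a t => cube_adj_iff.mp (hom (cube_adj_add_single a t))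
  have hconst : ∀ a, δ a = δ 0 := fun a => by
    simpa using apply_add_eq_of_forall_apply_add_single
      (fun a s => funext (dir_add_single_eq hf hδ a s)) 0 a
  refine ⟨δ 0, fun s t hst => ?_, fun a t => hconst a ▸ hδ a t⟩
  exact single_one_left_injective (add_left_cancel (hf ((hδ 0 s).trans (hst ▸ (hδ 0 t).symm))))

end Cube

variable {d m : ℕ} {N : Type*} [AddCommGroup N]

def dirVec (z : Fin d → N) (w : Fin d → ZMod 2) : N := ∑ i, (w i).val • z i

theorem dirVec_single (z : Fin d → N) (i : Fin d) : dirVec z (Pi.single i 1) = z i := by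
  simp [dirVec, Pi.single_apply, apply_ite, ZMod.val_one_eq_one_mod]

def edgeVec (z : Fin d → N) : Sym2 (Fin d → ZMod 2) → (Fin d → ZMod 2) → N :=
  Sym2.lift ⟨fun u v => Pi.single u (dirVec z (u + v)) + Pi.single v (dirVec z (u + v)),
    fun u v => by beta_reduce; rw [add_comm u v, add_comm (Pi.single u _)]⟩

theorem edgeVec_mk_of_add_eq (z : Fin d → N) {u v : Fin d → ZMod 2} {i : Fin d}
    (h : u + v = Pi.single i 1) : edgeVec z s(u, v) = Pi.single u (z i) + Pi.single v (z i) := by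
  simp only [edgeVec, Sym2.lift_mk, h, dirVec_single]

theorem sum_smul_edgeVec_eq_zero [Module ℝ N] (z : Fin d → N)
    {f : (Fin m → ZMod 2) → Fin d → ZMod 2} {σ : Fin m → Fin d}
    (hσ : ∀ a t, f (a + Pi.single t 1) = f a + Pi.single (σ t) 1)
    {c : Fin m → ℝ} (hc : ∑ t, c t • z (σ t) = 0) :
    ∑ p : (Fin m → ZMod 2) × Fin m, c p.2 • edgeVec z s(f p.1, f (p.1 + Pi.single p.2 1)) = 0 := by
  have hdir : ∀ a t, f a + f (a + Pi.single t 1) = Pi.single (σ t) 1 := fun a t => by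
    rw [hσ, ← add_assoc, ZModModule.add_self, zero_add]
  calc ∑ p : (Fin m → ZMod 2) × Fin m, c p.2 • edgeVec z s(f p.1, f (p.1 + Pi.single p.2 1))
      = ∑ t, ∑ a, (Pi.single (f a) (c t • z (σ t)) +
          Pi.single (f (a + Pi.single t 1)) (c t • z (σ t))) := by
        rw [Fintype.sum_prod_type_right]
        simp only [edgeVec_mk_of_add_eq z (hdir _ _), smul_add, Pi.single_smul']
    _ = ∑ t, 2 • ∑ a, Pi.single (f a) (c t • z (σ t)) := by
        refine Finset.sum_congr rfl fun t _ => ?_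
        rw [Finset.sum_add_distrib, two_nsmul]
        congr 1
        exact Equiv.sum_comp (Equiv.addRight (Pi.single t 1))
          fun a => (Pi.single (f a) (c t • z (σ t)) : (Fin d → ZMod 2) → N)
    _ = 2 • ∑ a, Pi.single (f a) (∑ t, c t • z (σ t)) := by
        rw [← Finset.smul_sum, Finset.sum_comm]
        congr 1
        refine Finset.sum_congr rfl fun a _ => ?_
        exact (map_sum (AddMonoidHom.single (fun _ => N) (f a)) _ _).symm
    _ = 0 := by simp [hc]

theorem mk_add_single_eq_mk_add_single_iff {a b : Fin m → ZMod 2} {s t : Fin m} :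
    s(b, b + Pi.single t 1) = s(a, a + Pi.single s 1) ↔
      t = s ∧ (b = a ∨ b = a + Pi.single s 1) := by
  rw [Sym2.eq_iff]
  constructor
  · rintro (⟨rfl, h⟩ | ⟨rfl, h⟩)
    · exact ⟨single_one_left_injective (add_left_cancel h), Or.inl rfl⟩
    · rw [add_assoc, add_eq_left, single_add_single_eq_zero_iff] at h
      exact ⟨h.symm, Or.inr rfl⟩
  · rintro ⟨rfl, rfl | rfl⟩
    · exact Or.inl ⟨rfl, rfl⟩
    · exact Or.inr ⟨rfl, by rw [add_assoc, ZModModule.add_self, add_zero]⟩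

theorem edgeVec_mem_span_of_copyAt [Module ℝ N] {z : Fin d → N}
    (hz : ∀ σ : Fin m → Fin d, Function.Injective σ →
      ∃ c : Fin m → ℝ, (∀ t, c t ≠ 0) ∧ ∑ t, c t • z (σ t) = 0)
    {Γ : SimpleGraph (Fin d → ZMod 2)} (hΓ : Γ ≤ cube d) {u v : Fin d → ZMod 2}
    (huv : (cube d).Adj u v) (hcopy : CopyAt (cube m) (Γ ⊔ edge u v) u v) :
    edgeVec z s(u, v) ∈ span ℝ (edgeVec z '' Γ.edgeSet) := by
  classical
  obtain ⟨f, hf, hom, a, b, hab, rfl, rfl⟩ := hcopy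
  obtain ⟨σ, hσ, hfσ⟩ := exists_injective_apply_add_single_eq hf fun _ _ h =>
    sup_le hΓ ((edge_le_iff _).mpr (Or.inr huv)) (hom h)
  obtain ⟨c, hc0, hc⟩ := hz σ hσ
  obtain ⟨t₀, rfl⟩ := cube_adj_iff.mp hab
  set e : (Fin m → ZMod 2) × Fin m → Sym2 (Fin d → ZMod 2) :=
    fun p => s(f p.1, f (p.1 + Pi.single p.2 1))
  have he : ∀ p, e p = e (a, t₀) ↔ p.2 = t₀ ∧ (p.1 = a ∨ p.1 = a + Pi.single t₀ 1) := fun p => by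
    simp only [e, ← Sym2.map_mk, (Sym2.map.injective hf).eq_iff, mk_add_single_eq_mk_add_single_iff]
  refine mem_span_of_sum_smul_eq_zero (fun p => e p = e (a, t₀))
    (sum_smul_edgeVec_eq_zero z hfσ hc) (fun p _ hp => congrArg (edgeVec z) hp)
    (fun p _ hp => subset_span ⟨e p, ?_, rfl⟩) ?_
  · have h := hom (cube_adj_add_single p.1 p.2)
    rw [← mem_edgeSet, edgeSet_sup] at h
    exact h.resolve_right fun h' => hp (edgeSet_edge_subset h')
  · -- The new edge comes from exactly two pairs, so its total coefficient is `2 * c t₀`.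
    have hfilter : (univ.filter fun p => e p = e (a, t₀)) =
        {(a, t₀), (a + Pi.single t₀ 1, t₀)} := by
      ext p
      simp only [Finset.mem_filter, Finset.mem_univ, true_and, he, Finset.mem_insert,
        Finset.mem_singleton, Prod.ext_iff]
      tauto
    have hne : (a, t₀) ≠ (a + Pi.single t₀ 1, t₀) := by
      simp [Prod.ext_iff, funext_iff, Pi.single_apply]
    rw [hfilter, Finset.sum_pair hne, ← two_mul]
    exact mul_ne_zero two_ne_zero (hc0 t₀)

def support (u : Fin d → ZMod 2) : Finset (Fin d) := {i | u i ≠ 0}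

theorem mem_support {u : Fin d → ZMod 2} {i : Fin d} : i ∈ support u ↔ u i ≠ 0 := by
  simp [support]

theorem support_bijective : Function.Bijective (support : (Fin d → ZMod 2) → Finset (Fin d)) := by
  refine ⟨fun u v h => funext fun i => ?_, fun s => ⟨fun i => if i ∈ s then 1 else 0, ?_⟩⟩
  · have := congrArg (i ∈ ·) h
    simp only [mem_support, eq_iff_iff] at this
    revert this; generalize u i = x; generalize v i = y; revert x y; decide
  · ext i
    by_cases hi : i ∈ s <;> simp [mem_support, hi]

theorem card_support_add_single_lt {u : Fin d → ZMod 2} {i : Fin d} (hi : i ∈ support u) :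
    (support (u + Pi.single i 1)).card < (support u).card := by
  have : support (u + Pi.single i 1) = (support u).erase i := by
    ext j
    rw [mem_support, Finset.mem_erase, mem_support] at *
    by_cases hj : j = i
    · subst hj
      simp only [Pi.add_apply, Pi.single_eq_same, ne_eq, not_true_eq_false, false_and, iff_false,
        not_not]
      revert hi; generalize u j = x; revert x; decide
    · simp [hj]
  rw [this]
  exact Finset.card_erase_lt_of_mem hi

theorem sum_apply_card_support (f : ℕ → ℕ) :
    ∑ u : Fin d → ZMod 2, f (support u).card = ∑ j ∈ range (d + 1), d.choose j * f j := by
  rw [Fintype.sum_bijective _ support_bijective _ (fun s => f s.card) fun _ => rfl,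
    ← Finset.powerset_univ, Finset.sum_powerset_apply_card, Finset.card_univ, Fintype.card_fin]
  rfl

theorem sum_min_card_support (r : ℕ) :
    ∑ u : Fin d → ZMod 2, min r (support u).card =
      r * 2 ^ d - ∑ j ∈ range r, (r - j) * d.choose j := by
  have hdeficit : ∑ u : Fin d → ZMod 2, (r - (support u).card) =
      ∑ j ∈ range r, (r - j) * d.choose j := by
    rw [sum_apply_card_support (r - ·)]
    calc ∑ j ∈ range (d + 1), d.choose j * (r - j)
        = ∑ j ∈ range (max (d + 1) r), d.choose j * (r - j) :=
          Finset.sum_subset (range_subset_range.mpr (le_max_left _ _)) fun j _ hj => by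
            rw [Nat.choose_eq_zero_of_lt (by simpa using hj), zero_mul]
      _ = ∑ j ∈ range r, d.choose j * (r - j) :=
          (Finset.sum_subset (range_subset_range.mpr (le_max_right _ _)) fun j _ hj => by
            rw [Nat.sub_eq_zero_of_le (by simpa using hj), mul_zero]).symm
      _ = ∑ j ∈ range r, (r - j) * d.choose j := Finset.sum_congr rfl fun j _ => mul_comm _ _
  have htotal : ∑ u : Fin d → ZMod 2, (min r (support u).card + (r - (support u).card)) =
      r * 2 ^ d := by
    simp [show ∀ n, min r n + (r - n) = r by omega, mul_comm]
  rw [Finset.sum_add_distrib, hdeficit] at htotal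
  omega

theorem sum_min_card_support_le_finrank [Module ℝ N] {r : ℕ} {z : Fin d → N}
    (hz : ∀ S : Finset (Fin d), S.card ≤ r → LinearIndependent ℝ fun i : S => z i) :
    ∑ u : Fin d → ZMod 2, min r (support u).card ≤
      Module.finrank ℝ (span ℝ (edgeVec z '' (cube d).edgeSet)) := by
  classical
  choose S hSsub hScard using fun u : Fin d → ZMod 2 =>
    Finset.exists_subset_card_eq (min_le_right r (support u).card)
  let v : (Σ u, S u) → (Fin d → ZMod 2) → N :=
    fun p => edgeVec z s(p.1, p.1 + Pi.single p.2.1 1)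
  have hv : ∀ p, v p = Pi.single p.1 (z p.2) + Pi.single (p.1 + Pi.single p.2.1 1) (z p.2) :=
    fun p => edgeVec_mk_of_add_eq z (by rw [← add_assoc, ZModModule.add_self, zero_add])
  have hind : LinearIndependent ℝ v := by
    refine linearIndependent_sigma_of_triangular (fun u => (support u).card) v (fun x => ?_)
      fun x y i hyx hw => ?_
    · have hx : ∀ i : Fin d, x + Pi.single i 1 ≠ x := fun i h => by
        simpa using congrFun (add_eq_left.mp h) i
      simpa [hv, hx] using hz (S x) ((hScard x).trans_le (min_le_left _ _))
    · have hlt := card_support_add_single_lt (hSsub y i.2)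
      have hyx' : y + Pi.single i.1 1 ≠ x := fun h => by rw [h] at hlt; omega
      simp [hv, hyx, hyx']
  have : Module.Finite ℝ (span ℝ (edgeVec z '' (cube d).edgeSet)) :=
    Module.Finite.span_of_finite ℝ (Set.toFinite _)
  calc ∑ u, min r (support u).card = Fintype.card (Σ u, S u) := by
        simp [Fintype.card_sigma, hScard]
    _ = Module.finrank ℝ (span ℝ (Set.range v)) := (finrank_span_eq_card hind).symm
    _ ≤ Module.finrank ℝ (span ℝ (edgeVec z '' (cube d).edgeSet)) := by
        refine Submodule.finrank_mono (span_mono ?_)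
        rintro _ ⟨p, rfl⟩
        exact ⟨_, cube_adj_add_single p.1 p.2.1, rfl⟩

end Hypercube

theorem stmt_6_general (d m : ℕ) :
    (m - 1) * 2 ^ d - ∑ j ∈ Finset.range (m - 1), (m - 1 - j) * d.choose j ≤
      wsatNum (cube d) (cube m) := by
  obtain _ | r := m
  · simp
  rw [Nat.add_sub_cancel, ← Hypercube.sum_min_card_support]
  let z : Fin d → Fin r → ℝ := fun i => momentCurve r ((i : ℕ) : ℝ)
  calc ∑ u : Fin d → ZMod 2, min r (Hypercube.support u).card
      ≤ Module.finrank ℝ (Submodule.span ℝ (Hypercube.edgeVec z '' (cube d).edgeSet)) :=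
        Hypercube.sum_min_card_support_le_finrank fun _ => linearIndependent_momentCurve_of_card_le
    _ ≤ wsatNum (cube d) (cube (r + 1)) :=
        finrank_span_image_edgeSet_le_wsatNum _ fun _ hΓ _ _ huv =>
          Hypercube.edgeVec_mem_span_of_copyAt
            (fun _ => exists_forall_ne_zero_sum_smul_momentCurve_eq_zero) hΓ huv

theorem stmt_6 (d m : ℕ) (hm : 1 ≤ m) (hd : m ≤ d) :
    (m - 1) * 2 ^ d - ∑ j ∈ Finset.range (m - 1), (m - 1 - j) * d.choose j ≤
      wsatNum (cube d) (cube m) :=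
  stmt_6_general d m
end

section
/- For every fixed m ≥ 2, sat(Q_d, Q_m) ≥ (m−1−o(1))·2^d as d → ∞. -/
open SimpleGraph Finset

/-!
Put `m = M + 1` and give the edge of `Q_d` between `u` and `u + e_i` the vector in
`ℝ^(V(Q_d) × M)` carrying the moment vector `(1, i, i², …, i^(M-1))` at both endpoints.
A copy of `Q_{M+1}` in `Q_d` is a subcube with directions `σ 0, …, σ M`. The `M + 1` moment
vectors of these directions satisfy a relation `∑ α_j • moment (σ j) = 0` with `α_j ≠ 0` for any
prescribed `j`, and weighting each edge of the copy in direction `j` by `α_j` gives a vanishing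
combination of its edge vectors; so each edge vector of the copy is in the span of the others.
In a saturated `G` every missing edge closes such a copy whose other edges are in `G`, hence the
edge vectors of `G` span those of all of `Q_d`, and `|E(G)|` is at least the rank of the latter.
At each vertex with at least `M` ones, the edges going down in its `M` smallest one-directions are
independent modulo everything below, so this rank is at least
`M · #{y : |y| ≥ M} ≥ M · 2^d - M² (d + 1)^M`.
-/

namespace HypercubeSaturation

section LinearAlgebra

variable {K E ι : Type*} [Field K] [AddCommGroup E] [Module K E]

lemma mem_of_sum_smul_eq_zero [Fintype ι] [DecidableEq ι] {S : Submodule K E} {c : ι → K}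
    {v : ι → E} {s : Finset ι} {x : E} (hsum : ∑ i, c i • v i = 0) (hs : ∀ i ∈ s, v i = x)
    (hc : ∑ i ∈ s, c i ≠ 0) (hS : ∀ i ∉ s, v i ∈ S) : x ∈ S := by
  have hx : (∑ i ∈ s, c i) • x = -∑ i ∈ sᶜ, c i • v i := by
    rw [sum_smul, sum_congr rfl fun i hi => by rw [← hs i hi]]
    exact eq_neg_of_add_eq_zero_left ((sum_add_sum_compl s _).trans hsum)
  rw [← S.smul_mem_iff hc, hx]
  exact S.neg_mem (S.sum_mem fun i hi => S.smul_mem _ (hS i (mem_compl.1 hi)))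

variable (K) in
def moment (M : ℕ) (t : K) : Fin M → K := fun k => t ^ (k : ℕ)

variable {M : ℕ}

lemma linearIndependent_moment {t : Fin M → K} (ht : Function.Injective t) :
    LinearIndependent K fun r => moment K M (t r) :=
  Matrix.linearIndependent_rows_of_det_ne_zero (Matrix.det_vandermonde_ne_zero_iff.2 ht)

lemma exists_sum_smul_moment_eq_zero {t : Fin (M + 1) → K} (ht : Function.Injective t)
    (j₀ : Fin (M + 1)) : ∃ α : Fin (M + 1) → K, α j₀ ≠ 0 ∧ ∑ j, α j • moment K M (t j) = 0 := by
  have hspan := (linearIndependent_moment (ht.comp j₀.succAbove_right_injective)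
    ).span_eq_top_of_card_eq_finrank' (by simp)
  obtain ⟨c, hc⟩ := (Submodule.mem_span_range_iff_exists_fun K).1
    (hspan ▸ Submodule.mem_top : moment K M (t j₀) ∈ _)
  refine ⟨Fin.insertNth j₀ (-1) c, by simp, ?_⟩
  rw [Fin.sum_univ_succAbove _ j₀]
  simp only [Fin.insertNth_apply_same, Fin.insertNth_apply_succAbove]
  rw [← hc, neg_one_smul]
  exact neg_add_cancel _

end LinearAlgebra

section Saturation

lemma sup_edge_le {β : Type*} {F G : SimpleGraph β} {u v : β} (hG : G ≤ F) (huv : F.Adj u v) :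
    G ⊔ SimpleGraph.fromEdgeSet {s(u, v)} ≤ F :=
  sup_le hG ((edge_le_iff F).2 (Or.inr huv))

lemma exists_saturated {α β : Type*} [Finite β] (F : SimpleGraph β) {H : SimpleGraph α}
    (hH : H ≠ ⊥) : ∃ G, Saturated F G H := by
  obtain ⟨a, b, hab⟩ := ne_bot_iff_exists_adj.1 hH
  obtain ⟨G, ⟨hGF, hGfree⟩, hGmax⟩ := Set.Finite.exists_maximalFor id
    {G : SimpleGraph β | G ≤ F ∧ ¬ ContainsCopy H G} (Set.toFinite _)
    ⟨⊥, bot_le, fun ⟨f, _, hf⟩ => hf hab⟩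
  refine ⟨G, hGF, hGfree, fun u v huv hGuv => ?_⟩
  by_contra hfree
  refine hGuv (hGmax ⟨sup_edge_le hGF huv, hfree⟩ le_sup_left ?_)
  exact Or.inr ((edge_adj ..).2 ⟨Or.inl ⟨rfl, rfl⟩, huv.ne⟩)

lemma exists_saturated_ncard_eq_satNum {α β : Type*} {F : SimpleGraph β} {H : SimpleGraph α}
    (h : ∃ G, Saturated F G H) : ∃ G, Saturated F G H ∧ G.edgeSet.ncard = satNum F H := by
  obtain ⟨G, hG⟩ := h
  exact Nat.sInf_mem (s := {n | ∃ G, Saturated F G H ∧ G.edgeSet.ncard = n}) ⟨_, G, hG, rfl⟩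

end Saturation

section Cube

variable {d : ℕ}

lemma zmod_two_ne_iff {a b : ZMod 2} : a ≠ b ↔ b = a + 1 := by
  revert a b; decide

lemma add_single_add_single (u : Fin d → ZMod 2) (i : Fin d) :
    u + Pi.single i 1 + Pi.single i 1 = u := by
  rw [add_assoc, ZModModule.add_self, add_zero]

lemma single_one_injective :
    Function.Injective fun i : Fin d => (Pi.single i 1 : Fin d → ZMod 2) := by
  intro i j h
  by_contra hij
  simpa [hij] using congrFun h i

lemma single_add_single_eq_zero_iff {i j : Fin d} :
    (Pi.single i 1 + Pi.single j 1 : Fin d → ZMod 2) = 0 ↔ i = j := by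
  rw [add_eq_zero_iff_eq_neg, ZModModule.neg_eq_self, single_one_injective.eq_iff]

lemma cube_adj_iff {u v : Fin d → ZMod 2} : (cube d).Adj u v ↔ ∃ i, v = u + Pi.single i 1 := by
  have key : ∀ u v : Fin d → ZMod 2,
      (∃ i, u i ≠ v i ∧ ∀ j, j ≠ i → u j = v j) ↔ ∃ i, v = u + Pi.single i 1 := by
    refine fun u v => exists_congr fun i => ⟨fun ⟨hi, hj⟩ => funext fun j => ?_, ?_⟩
    · rcases eq_or_ne j i with rfl | hji
      · simpa using zmod_two_ne_iff.1 hi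
      · simpa [hji] using (hj j hji).symm
    · rintro rfl
      exact ⟨by simp, fun j hj => by simp [hj]⟩
  simp only [cube, fromRel_adj, key]
  refine ⟨fun ⟨_, h⟩ => h.elim id fun ⟨i, hi⟩ => ⟨i, ?_⟩, fun ⟨i, hi⟩ => ⟨?_, Or.inl ⟨i, hi⟩⟩⟩
  · rw [hi, add_single_add_single]
  · rintro rfl
    simp at hi

lemma eq_of_forall_add_single {β : Type*} {φ : (Fin d → ZMod 2) → β}
    (h : ∀ x i, φ (x + Pi.single i 1) = φ x) (x : Fin d → ZMod 2) : φ x = φ 0 := by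
  suffices ∀ s : Finset (Fin d), φ (∑ i ∈ s, Pi.single i (x i)) = φ 0 by
    simpa only [Finset.univ_sum_single] using this univ
  intro s
  induction s using Finset.induction_on with
  | empty => rw [sum_empty]
  | insert i s hi ih =>
    rw [sum_insert hi, add_comm]
    rcases (by decide : ∀ a : ZMod 2, a = 0 ∨ a = 1) (x i) with hx | hx
    · rw [hx, Pi.single_zero, add_zero, ih]
    · rw [hx, h, ih]

lemma eq_of_single_add_single_eq {a b c e : Fin d}
    (h : (Pi.single a 1 + Pi.single b 1 : Fin d → ZMod 2) = Pi.single c 1 + Pi.single e 1)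
    (hab : a ≠ b) (hac : a ≠ c) : b = c := by
  by_contra hbc
  have heb : e = b := by
    by_contra heb
    simpa [hab, Ne.symm hbc, heb] using congrFun h b
  rw [heb, add_left_inj] at h
  exact hac (single_one_injective h)

lemma sym2_mk_add_single_eq {x a : Fin d → ZMod 2} {j k : Fin d}
    (h : s(x, x + Pi.single j 1) = s(a, a + Pi.single k 1)) :
    j = k ∧ (x = a ∨ x = a + Pi.single k 1) := by
  rcases Sym2.eq_iff.1 h with ⟨rfl, h⟩ | ⟨rfl, h⟩
  · exact ⟨single_one_injective (add_left_cancel h), Or.inl rfl⟩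
  · rw [add_assoc, add_eq_left, single_add_single_eq_zero_iff] at h
    exact ⟨h.symm, Or.inr rfl⟩

variable {m : ℕ} {f : (Fin m → ZMod 2) → (Fin d → ZMod 2)}

lemma exists_injective_map_add_single (inj : Function.Injective f)
    (hom : ∀ ⦃a b⦄, (cube m).Adj a b → (cube d).Adj (f a) (f b)) :
    ∃ σ : Fin m → Fin d, Function.Injective σ ∧
      ∀ x j, f (x + Pi.single j 1) = f x + Pi.single (σ j) 1 := by
  choose δ hδ using fun (x : Fin m → ZMod 2) j =>
    cube_adj_iff.1 (hom (cube_adj_iff.2 ⟨j, rfl⟩ : (cube m).Adj x (x + Pi.single j 1)))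
  -- opposite edges of a square of `Q_m` are parallel in `Q_d`, by injectivity of `f`
  have hδ_add : ∀ x j k, δ (x + Pi.single k 1) j = δ x j := by
    intro x j k
    rcases eq_or_ne k j with rfl | hkj
    · have h := hδ (x + Pi.single k 1) k
      rw [add_single_add_single, hδ x k, add_assoc, left_eq_add,
        single_add_single_eq_zero_iff] at h
      exact h.symm
    · have hsq : f (x + Pi.single k 1) + Pi.single (δ (x + Pi.single k 1) j) 1 =
          f (x + Pi.single j 1) + Pi.single (δ (x + Pi.single j 1) k) 1 := by
        rw [← hδ, ← hδ, add_right_comm]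
      rw [hδ x k, hδ x j, add_assoc, add_assoc, add_right_inj] at hsq
      refine eq_of_single_add_single_eq hsq (fun h => hkj ?_) (fun h => hkj ?_)
      · have hx : f (x + Pi.single k 1 + Pi.single j 1) = f x := by
          rw [hδ, hδ x k, ← h, add_single_add_single]
        rw [add_assoc] at hx
        exact single_add_single_eq_zero_iff.1 (add_eq_left.1 (inj hx))
      · exact single_one_injective (add_right_injective x (inj (by rw [hδ, hδ, h])))
  refine ⟨δ 0, fun j k h => ?_, fun x j => ?_⟩
  · exact single_one_injective (add_right_injective 0 (inj (by rw [hδ, hδ, h])))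
  · rw [hδ, eq_of_forall_add_single (φ := fun y => δ y j) (fun y k => hδ_add y j k) x]

end Cube

section EdgeVectors

variable (M : ℕ) {d : ℕ}

-- only its values at unit vectors `z = u + v`, i.e. on edges `uv` of `Q_d`, matter
noncomputable def edgeMoment (z : Fin d → ZMod 2) : Fin M → ℝ :=
  ∑ i with z i ≠ 0, moment ℝ M (i : ℕ)

noncomputable def edgeVec : Sym2 (Fin d → ZMod 2) → (Fin d → ZMod 2) → Fin M → ℝ :=
  Sym2.lift ⟨fun u v => Pi.single u (edgeMoment M (u + v)) + Pi.single v (edgeMoment M (u + v)),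
    fun u v => by dsimp only; rw [add_comm u v, add_comm (Pi.single u _)]⟩

lemma edgeVec_mk_add_single (u : Fin d → ZMod 2) (i : Fin d) :
    edgeVec M s(u, u + Pi.single i 1) =
      Pi.single u (moment ℝ M i) + Pi.single (u + Pi.single i 1) (moment ℝ M i) := by
  have h : u + (u + Pi.single i 1) = Pi.single i 1 := by
    rw [← add_assoc, ZModModule.add_self, zero_add]
  have hfilter : ({j | (Pi.single i 1 : Fin d → ZMod 2) j ≠ 0} : Finset (Fin d)) = {i} := by
    ext j
    by_cases hj : j = i <;> simp [hj]
  simp only [edgeVec, Sym2.lift_mk, edgeMoment, h, hfilter, sum_singleton]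

variable {M}

lemma sum_sum_smul_edgeVec_eq_zero {f : (Fin (M + 1) → ZMod 2) → (Fin d → ZMod 2)}
    {σ : Fin (M + 1) → Fin d} (hf : ∀ x j, f (x + Pi.single j 1) = f x + Pi.single (σ j) 1)
    {α : Fin (M + 1) → ℝ} (hα : ∑ j, α j • moment ℝ M (σ j : ℕ) = 0) :
    ∑ x, ∑ j, α j • edgeVec M s(f x, f (x + Pi.single j 1)) = 0 := by
  set τ : Fin (M + 1) → Fin M → ℝ := fun j => α j • moment ℝ M (σ j : ℕ)
  have hshift : ∀ j : Fin (M + 1),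
      ∑ x, (Pi.single (f (x + Pi.single j 1)) (τ j) : (Fin d → ZMod 2) → Fin M → ℝ) =
        ∑ x, Pi.single (f x) (τ j) := fun j =>
    Fintype.sum_equiv (Equiv.addRight (Pi.single j 1)) _ _ fun _ => rfl
  have hvertex : ∀ x, ∑ j, (Pi.single (f x) (τ j) : (Fin d → ZMod 2) → Fin M → ℝ) = 0 := by
    intro x
    funext y
    rcases eq_or_ne y (f x) with rfl | hy
    · simpa [Finset.sum_apply] using hα
    · simp [Finset.sum_apply, hy]
  calc ∑ x, ∑ j, α j • edgeVec M s(f x, f (x + Pi.single j 1))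
      = ∑ x, ∑ j, ((Pi.single (f x) (τ j) : (Fin d → ZMod 2) → Fin M → ℝ) +
          Pi.single (f (x + Pi.single j 1)) (τ j)) := by
        refine sum_congr rfl fun x _ => sum_congr rfl fun j _ => ?_
        rw [hf, edgeVec_mk_add_single, ← hf, smul_add, Pi.single_smul', Pi.single_smul']
    _ = ∑ x, ∑ j, (Pi.single (f x) (τ j) : (Fin d → ZMod 2) → Fin M → ℝ) +
          ∑ j, ∑ x, Pi.single (f (x + Pi.single j 1)) (τ j) := by
        simp only [sum_add_distrib]
        exact congrArg _ sum_comm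
    _ = 0 := by
        simp only [hshift, hvertex, sum_const_zero, zero_add]
        exact sum_comm.trans (by simp only [hvertex, sum_const_zero])

end EdgeVectors

variable {M d : ℕ}

lemma edgeVec_mem_of_copy {S : Submodule ℝ ((Fin d → ZMod 2) → Fin M → ℝ)}
    {f : (Fin (M + 1) → ZMod 2) → (Fin d → ZMod 2)} (inj : Function.Injective f)
    (hom : ∀ ⦃a b⦄, (cube (M + 1)).Adj a b → (cube d).Adj (f a) (f b))
    (a : Fin (M + 1) → ZMod 2) (j₀ : Fin (M + 1))
    (hS : ∀ x j, s(f x, f (x + Pi.single j 1)) ≠ s(f a, f (a + Pi.single j₀ 1)) →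
      edgeVec M s(f x, f (x + Pi.single j 1)) ∈ S) :
    edgeVec M s(f a, f (a + Pi.single j₀ 1)) ∈ S := by
  obtain ⟨σ, hσ, hf⟩ := exists_injective_map_add_single inj hom
  obtain ⟨α, hα₀, hα⟩ := exists_sum_smul_moment_eq_zero (K := ℝ) (t := fun j => (σ j : ℕ))
    (Nat.cast_injective.comp (Fin.val_injective.comp hσ)) j₀
  have hsum := sum_sum_smul_edgeVec_eq_zero hf hα
  rw [← Fintype.sum_prod_type'] at hsum
  have hne : (a, j₀) ≠ (a + Pi.single j₀ 1, j₀) := by simp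
  refine mem_of_sum_smul_eq_zero hsum (s := {(a, j₀), (a + Pi.single j₀ 1, j₀)}) ?_ ?_ ?_
  · simp only [mem_insert, mem_singleton]
    rintro q (rfl | rfl)
    · rfl
    · rw [add_single_add_single, Sym2.eq_swap]
  · rw [sum_pair hne, ← two_mul]
    exact mul_ne_zero two_ne_zero hα₀
  · rintro ⟨x, j⟩ hq
    refine hS x j fun h => hq ?_
    rw [← Sym2.map_mk, ← Sym2.map_mk] at h
    obtain ⟨rfl, rfl | rfl⟩ := sym2_mk_add_single_eq (Sym2.map.injective inj h) <;> simp

lemma cube_succ_ne_bot (m : ℕ) : cube (m + 1) ≠ ⊥ :=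
  ne_bot_iff_exists_adj.2 ⟨0, _, cube_adj_iff.2 ⟨0, rfl⟩⟩

/-- A missing edge `uv` completes a copy of `Q_{M+1}` through `uv`, all of whose other edges lie
in `G`. -/
lemma edgeVec_mem_span_of_saturated {G : SimpleGraph (Fin d → ZMod 2)}
    (hG : Saturated (cube d) G (cube (M + 1))) {u v : Fin d → ZMod 2} (huv : (cube d).Adj u v) :
    edgeVec M s(u, v) ∈ Submodule.span ℝ (edgeVec M '' G.edgeSet) := by
  obtain ⟨hGF, hGfree, hGsat⟩ := hG
  by_cases hGuv : G.Adj u v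
  · exact Submodule.subset_span ⟨_, hGuv, rfl⟩
  obtain ⟨f, inj, hom⟩ := hGsat u v huv hGuv
  have hG_of_ne : ∀ ⦃x y⦄, (cube (M + 1)).Adj x y → s(f x, f y) ≠ s(u, v) → G.Adj (f x) (f y) :=
    fun x y hxy hne => (hom hxy).resolve_right fun h => hne (((adj_edge u v).1 h).1.symm)
  obtain ⟨a, j₀, hauv⟩ : ∃ a j₀, s(f a, f (a + Pi.single j₀ 1)) = s(u, v) := by
    by_contra! hno
    refine hGfree ⟨f, inj, fun x y hxy => hG_of_ne hxy ?_⟩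
    obtain ⟨j, rfl⟩ := cube_adj_iff.1 hxy
    exact hno x j
  rw [← hauv]
  refine edgeVec_mem_of_copy inj (fun x y hxy => sup_edge_le hGF huv (hom hxy)) a j₀
    fun x j hne => Submodule.subset_span ⟨_, hG_of_ne (cube_adj_iff.2 ⟨j, rfl⟩) (hauv ▸ hne), rfl⟩

def supp (y : Fin d → ZMod 2) : Finset (Fin d) := {i | y i ≠ 0}

lemma supp_injective : Function.Injective (supp (d := d)) := by
  intro y z h
  funext i
  have hi : y i ≠ 0 ↔ z i ≠ 0 := by simpa [supp] using congrArg (i ∈ ·) h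
  revert hi
  generalize y i = a
  generalize z i = b
  revert a b
  decide

lemma card_compl_supp_lt {x : Fin d → ZMod 2} {i : Fin d} (hi : x i ≠ 0) :
    #(supp x)ᶜ < #(supp (x + Pi.single i 1))ᶜ := by
  have hxi : x i + 1 = 0 := by revert hi; generalize x i = a; revert a; decide
  refine card_lt_card ((ssubset_iff_of_subset fun j hj => ?_).2 ⟨i, ?_, ?_⟩)
  · have hji : j ≠ i := by rintro rfl; simp_all [supp]
    simp_all [supp]
  all_goals simp_all [supp]

abbrev Heavy (d M : ℕ) : Type := {y : Fin d → ZMod 2 // M ≤ #(supp y)}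

def downDir (y : Heavy d M) : Fin M ↪o Fin d := orderEmbOfCardLe (supp y.1) y.2

noncomputable def downEdgeVec (q : Heavy d M × Fin M) : (Fin d → ZMod 2) → Fin M → ℝ :=
  edgeVec M s(q.1.1, q.1.1 + Pi.single (downDir q.1 q.2) 1)

/-- Ordered by the number of zero coordinates of their top vertex, the down edges form a block
triangular system whose diagonal blocks are invertible Vandermonde matrices. -/
lemma linearIndependent_downEdgeVec : LinearIndependent ℝ (downEdgeVec (d := d) (M := M)) := by
  rw [Fintype.linearIndependent_iff]
  intro g hg
  suffices h : ∀ n, ∀ q : Heavy d M × Fin M, #(supp q.1.1)ᶜ = n → g q = 0 from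
    fun q => h _ q rfl
  intro n
  induction n using Nat.strong_induction_on with | _ n ih => ?_
  rintro ⟨y, r⟩ rfl
  have hlower : ∀ q : Heavy d M × Fin M, q.1 ≠ y → g q • downEdgeVec q y.1 = 0 := by
    rintro ⟨x, k⟩ hxy
    have hxy' : y.1 ≠ x.1 := fun h => hxy (Subtype.ext h.symm)
    simp only [downEdgeVec, edgeVec_mk_add_single, Pi.add_apply, Pi.single_apply, hxy', if_false,
      zero_add]
    split_ifs with h
    · have hx : x.1 (downDir x k) ≠ 0 := (mem_filter.1 (orderEmbOfCardLe_mem _ x.2 k)).2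
      rw [ih _ (h ▸ card_compl_supp_lt hx) (x, k) rfl, zero_smul]
    · exact smul_zero _
  have hrow : ∑ r', g (y, r') • moment ℝ M (downDir y r' : ℕ) = 0 := by
    have h := congrFun hg y.1
    rw [Fintype.sum_prod_type, Finset.sum_apply, sum_eq_single y] at h
    · simpa [downEdgeVec, edgeVec_mk_add_single, Finset.sum_apply] using h
    · intro x _ hxy
      simpa [Finset.sum_apply] using sum_eq_zero fun k _ => hlower (x, k) hxy
    · simp
  have hdirs : Function.Injective fun r' : Fin M => ((downDir y r' : ℕ) : ℝ) :=
    Nat.cast_injective.comp (Fin.val_injective.comp (downDir y).injective)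
  have hli := linearIndependent_moment hdirs
  exact Fintype.linearIndependent_iff.1 hli (fun r' => g (y, r')) hrow r

lemma two_pow_le_card_heavy_add (d M : ℕ) : 2 ^ d ≤ Fintype.card (Heavy d M) + M * (d + 1) ^ M := by
  have hlight : #({y | #(supp y) < M} : Finset (Fin d → ZMod 2)) ≤ M * (d + 1) ^ M := by
    calc #({y | #(supp y) < M} : Finset (Fin d → ZMod 2))
        ≤ #((range M).biUnion fun j => powersetCard j (univ : Finset (Fin d))) := by
          refine card_le_card_of_injOn supp (fun y hy => ?_) supp_injective.injOn
          simp only [coe_filter, Set.mem_ofPred_eq, mem_univ, true_and] at hy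
          simp [hy]
      _ ≤ ∑ j ∈ range M, (d + 1) ^ M := by
          refine card_biUnion_le.trans (sum_le_sum fun j hj => ?_)
          rw [card_powersetCard, card_univ, Fintype.card_fin]
          calc d.choose j ≤ d ^ j := Nat.choose_le_pow d j
            _ ≤ (d + 1) ^ j := Nat.pow_le_pow_left d.le_succ j
            _ ≤ (d + 1) ^ M := Nat.pow_le_pow_right d.succ_pos (mem_range.1 hj).le
      _ = M * (d + 1) ^ M := by rw [sum_const, card_range, smul_eq_mul]
  have hsplit := card_filter_add_card_filter_not (s := (univ : Finset (Fin d → ZMod 2)))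
    (fun y => M ≤ #(supp y))
  simp only [card_univ, Fintype.card_fun, ZMod.card, Fintype.card_fin, not_le] at hsplit
  rw [Fintype.card_subtype]
  omega

lemma card_heavy_mul_le_ncard_edgeSet {G : SimpleGraph (Fin d → ZMod 2)}
    (hG : Saturated (cube d) G (cube (M + 1))) :
    Fintype.card (Heavy d M) * M ≤ G.edgeSet.ncard := by
  classical
  have hspan : Submodule.span ℝ (Set.range (downEdgeVec (d := d) (M := M))) ≤
      Submodule.span ℝ (edgeVec M '' G.edgeSet) := by
    refine Submodule.span_le.2 ?_
    rintro _ ⟨q, rfl⟩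
    exact edgeVec_mem_span_of_saturated hG (cube_adj_iff.2 ⟨_, rfl⟩)
  calc Fintype.card (Heavy d M) * M
      = Module.finrank ℝ (Submodule.span ℝ (Set.range (downEdgeVec (d := d) (M := M)))) := by
        rw [finrank_span_eq_card linearIndependent_downEdgeVec, Fintype.card_prod, Fintype.card_fin]
    _ ≤ Module.finrank ℝ (Submodule.span ℝ (edgeVec M '' G.edgeSet)) :=
        Submodule.finrank_mono hspan
    _ ≤ (edgeVec M '' G.edgeSet).toFinset.card := finrank_span_le_card _
    _ ≤ G.edgeSet.ncard := by
        rw [← Set.ncard_eq_toFinset_card']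
        exact Set.ncard_image_le (Set.toFinite _)

lemma mul_two_pow_le_satNum_add (d M : ℕ) :
    M * 2 ^ d ≤ satNum (cube d) (cube (M + 1)) + M * (M * (d + 1) ^ M) := by
  obtain ⟨G, hG, hGsat⟩ :=
    exists_saturated_ncard_eq_satNum (exists_saturated (cube d) (cube_succ_ne_bot M))
  have hrank := card_heavy_mul_le_ncard_edgeSet hG
  calc M * 2 ^ d ≤ M * (Fintype.card (Heavy d M) + M * (d + 1) ^ M) :=
        Nat.mul_le_mul_left M (two_pow_le_card_heavy_add d M)
    _ = Fintype.card (Heavy d M) * M + M * (M * (d + 1) ^ M) := by ring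
    _ ≤ satNum (cube d) (cube (M + 1)) + M * (M * (d + 1) ^ M) :=
        Nat.add_le_add_right (hGsat ▸ hrank) _

lemma eventually_mul_pow_le_two_pow (a : ℝ) {ε : ℝ} (hε : 0 < ε) (M : ℕ) :
    ∀ᶠ d : ℕ in Filter.atTop, a * ((d : ℝ) + 1) ^ M ≤ ε * 2 ^ d := by
  have h : (fun n : ℕ => ((n : ℝ) + 1) ^ M) =o[Filter.atTop] fun n => (2 : ℝ) ^ n := by
    have := (isLittleO_pow_const_const_pow_of_one_lt (R := ℝ) M one_lt_two).comp_tendsto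
      (Filter.tendsto_add_atTop_nat 1)
    simp only [Function.comp_def, Nat.cast_add, Nat.cast_one, pow_succ'] at this
    exact this.of_const_mul_right
  filter_upwards [(h.const_mul_left a).def hε] with d hd
  simp only [Real.norm_eq_abs, abs_mul, abs_pow] at hd
  calc a * ((d : ℝ) + 1) ^ M ≤ |a| * |(d : ℝ) + 1| ^ M := by
        rw [abs_of_nonneg (by positivity : (0 : ℝ) ≤ d + 1)]
        exact mul_le_mul_of_nonneg_right (le_abs_self a) (by positivity)
    _ ≤ ε * 2 ^ d := by simpa using hd

end HypercubeSaturation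

open HypercubeSaturation in
theorem stmt_12 (m : ℕ) (hm : 2 ≤ m) :
    ∀ ε : ℝ, 0 < ε → ∃ D : ℕ, ∀ d ≥ D,
      ((m : ℝ) - 1 - ε) * 2 ^ d ≤ (satNum (cube d) (cube m) : ℝ) := by
  obtain ⟨M, rfl⟩ : ∃ M, m = M + 1 := ⟨m - 1, by omega⟩
  intro ε hε
  obtain ⟨D, hD⟩ := Filter.eventually_atTop.1 (eventually_mul_pow_le_two_pow ((M : ℝ) * M) hε M)
  refine ⟨D, fun d hd => ?_⟩
  have hsat : (M : ℝ) * 2 ^ d ≤ satNum (cube d) (cube (M + 1)) + M * (M * (d + 1) ^ M) := by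
    exact_mod_cast mul_two_pow_le_satNum_add d M
  push_cast
  linear_combination hsat + hD d hd
end

section
/- Let y_1,...,y_{r−2} be a basis of R^{r−2} and define recursively y_t = −Σ_{j=t−r+2}^{t−1} y_j for r−1 ≤ t ≤ k−1. Then for every i with 1 ≤ i ≤ k−r+1, the vectors y_i, y_{i+1}, ..., y_{i+r−3} are linearly independent, and for every j with 1 ≤ j ≤ k−r+1, Σ_{s=j}^{j+r−2} y_s = 0. -/
open SimpleGraph Finset

/-! By the recurrence every `r - 1` consecutive terms sum to zero, so the first vector of a
window `y i, …, y (i + r - 3)` is minus the sum of the next `r - 2` terms. Hence the span of a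
window is contained in that of the next one, every window spans `ℝ^(r-2)`, and `r - 2` spanning
vectors there are linearly independent. -/

section Windows

variable {R M : Type*} [Ring R] [AddCommGroup M] [Module R M] (y : ℕ → M)

theorem sum_Icc_eq_zero_of_eq_neg_sum_Ico {a t : ℕ} (hat : a ≤ t)
    (h : y t = -∑ j ∈ Ico a t, y j) : ∑ j ∈ Icc a t, y j = 0 := by
  rw [← Ico_insert_right hat, sum_insert right_notMem_Ico, h, neg_add_cancel]

variable (R)

theorem span_window_le_span_window_succ (n i : ℕ) (h : ∑ j ∈ Icc i (i + n), y j = 0) :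
    Submodule.span R (Set.range fun s : Fin n => y (i + s)) ≤
      Submodule.span R (Set.range fun s : Fin n => y (i + 1 + s)) := by
  have mem_of_mem_Ioc : ∀ j ∈ Ioc i (i + n),
      y j ∈ Submodule.span R (Set.range fun s : Fin n => y (i + 1 + s)) := by
    intro j hj
    rw [mem_Ioc] at hj
    exact Submodule.subset_span ⟨⟨j - (i + 1), by omega⟩, congrArg y (by rw [Fin.val_mk]; omega)⟩
  rw [Submodule.span_le]
  rintro _ ⟨⟨s, hs⟩, rfl⟩
  rcases s with _ | s
  · rw [← Ioc_insert_left (by omega), sum_insert left_notMem_Ioc] at h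
    change y (i + 0) ∈ _
    rw [add_zero, eq_neg_of_add_eq_zero_left h]
    exact Submodule.neg_mem _ (Submodule.sum_mem _ mem_of_mem_Ioc)
  · exact mem_of_mem_Ioc (i + (s + 1)) (mem_Ioc.mpr ⟨by omega, by omega⟩)

theorem span_window_eq_top {n a b : ℕ}
    (ha : Submodule.span R (Set.range fun s : Fin n => y (a + s)) = ⊤)
    (hsum : ∀ i, a ≤ i → i < b → ∑ j ∈ Icc i (i + n), y j = 0) :
    ∀ i, a ≤ i → i ≤ b → Submodule.span R (Set.range fun s : Fin n => y (i + s)) = ⊤ := by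
  intro i hai
  induction i, hai using Nat.le_induction with
  | base => exact fun _ => ha
  | succ i hai ih =>
    intro hib
    exact eq_top_iff.mpr <| (ih (by omega)).ge.trans
      (span_window_le_span_window_succ R y n i (hsum i hai hib))

end Windows

theorem stmt_13_general (r k : ℕ) (hr : 2 ≤ r) (hk : r ≤ k)
    (y : ℕ → (Fin (r - 2) → ℝ))
    (hspan : Submodule.span ℝ (Set.range (fun i : Fin (r - 2) => y (i.val + 1))) = ⊤)
    (hrec : ∀ t, r - 1 ≤ t → t ≤ k - 1 →
      y t = -∑ j ∈ Finset.Ico (t + 2 - r) t, y j) :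
    (∀ i, 1 ≤ i → i ≤ k - r + 1 →
      LinearIndependent ℝ (fun s : Fin (r - 2) => y (i + s.val))) ∧
    (∀ j, 1 ≤ j → j ≤ k - r + 1 → ∑ s ∈ Finset.Icc j (j + r - 2), y s = 0) := by
  have hsum : ∀ j, 1 ≤ j → j ≤ k - r + 1 → ∑ s ∈ Icc j (j + r - 2), y s = 0 := by
    intro j hj hjk
    have h := hrec (j + r - 2) (by omega) (by omega)
    rw [show j + r - 2 + 2 - r = j by omega] at h
    exact sum_Icc_eq_zero_of_eq_neg_sum_Ico y (by omega) h
  have hspan₁ : Submodule.span ℝ (Set.range fun s : Fin (r - 2) => y (1 + s)) = ⊤ := by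
    simpa only [add_comm 1] using hspan
  have hspan_window := span_window_eq_top ℝ y hspan₁ fun i hi hik =>
    (show i + (r - 2) = i + r - 2 by omega) ▸ hsum i hi hik.le
  refine ⟨fun i hi hik => ?_, hsum⟩
  exact linearIndependent_of_top_le_span_of_card_eq_finrank
    (hspan_window i hi hik).ge (by simp)

theorem stmt_13 (r k : ℕ) (hr : 2 ≤ r) (hk : r ≤ k)
    (y : ℕ → (Fin (r - 2) → ℝ))
    (hli : LinearIndependent ℝ (fun i : Fin (r - 2) => y (i.val + 1)))
    (hspan : Submodule.span ℝ (Set.range (fun i : Fin (r - 2) => y (i.val + 1))) = ⊤)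
    (hrec : ∀ t, r - 1 ≤ t → t ≤ k - 1 →
      y t = -∑ j ∈ Finset.Ico (t + 2 - r) t, y j) :
    (∀ i, 1 ≤ i → i ≤ k - r + 1 →
      LinearIndependent ℝ (fun s : Fin (r - 2) => y (i + s.val))) ∧
    (∀ j, 1 ≤ j → j ≤ k - r + 1 → ∑ s ∈ Finset.Icc j (j + r - 2), y s = 0) :=
  stmt_13_general r k hr hk y hspan hrec
end

section
/- Let G be the spanning subgraph of P_k^d where each vertex v is joined to all vertices v − e_j with the j-th coordinate of v small (i.e., less than r−1 and positive), together with min{L(v), m−1} downward edges in large coordinates, where L(v) is the number of coordinates of v of size at least r−1. Then the number of edges of G equals Σ_{j=0}^{d}Σ_{i=0}^{d−j}(m−1+i)C(d,j)C(d−j,i)(k−r+1)^j(r−2)^i − Σ_{j=0}^{m−2}Σ_{i=0}^{d−j}(m−1−j)C(d,j)C(d−j,i)(k−r+1)^j(r−2)^i. -/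
open SimpleGraph Finset

/-- `u` is obtained from `v` by decreasing coordinate `j` by one. -/
def downAdj {k d : ℕ} (u v : Fin d → Fin k) (j : Fin d) : Prop :=
  (u j : ℕ) + 1 = (v j : ℕ) ∧ ∀ i, i ≠ j → u i = v i

/-!
An edge of `G` is determined by its upper endpoint `v` and the coordinate `j` in which it
descends, so `G` has `∑ v, #{j | 0 < v j ∧ (v j < r - 1 ∨ j ∈ D v)}` edges, and the summand
is `S(v) + min (L(v), m - 1)` with `S(v)` the number of small nonzero coordinates. Sorting the
vertices by the sets of their large and small nonzero coordinates, there are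
`(k - r + 1) ^ j * (r - 2) ^ i` vertices for each of the `d.choose j * (d - j).choose i` choices of
these sets with sizes `j` and `i`. Finally `i + min j (m - 1) = (m - 1 + i) - (m - 1 - j)`.
-/

theorem sum_powerset_sum_powerset_sdiff_apply_card {ι : Type*} [DecidableEq ι] (s : Finset ι)
    (f : ℕ → ℕ → ℕ) :
    ∑ J ∈ s.powerset, ∑ I ∈ (s \ J).powerset, f (#J) (#I) =
      ∑ j ∈ range (#s + 1), ∑ i ∈ range (#s - j + 1),
        f j i * (#s).choose j * (#s - j).choose i := by
  calc ∑ J ∈ s.powerset, ∑ I ∈ (s \ J).powerset, f (#J) (#I)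
      = ∑ J ∈ s.powerset, ∑ i ∈ range (#s - #J + 1), (#s - #J).choose i * f (#J) i :=
        sum_congr rfl fun J hJ => by
          rw [sum_powerset_apply_card (f (#J)), card_sdiff_of_subset (mem_powerset.1 hJ)]; rfl
    _ = ∑ j ∈ range (#s + 1), (#s).choose j *
          ∑ i ∈ range (#s - j + 1), (#s - j).choose i * f j i :=
        sum_powerset_apply_card fun j => ∑ i ∈ range (#s - j + 1), (#s - j).choose i * f j i
    _ = _ := sum_congr rfl fun j _ => by
        rw [mul_sum]
        exact sum_congr rfl fun i _ => by ring

section PiFilter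

variable {ι α : Type*} [Fintype ι] [DecidableEq ι] [Fintype α]
  (P Q : α → Prop) [DecidablePred P] [DecidablePred Q]

theorem card_pi_filter_eq_and_filter_eq (hPQ : ∀ x, P x → ¬ Q x) {J I : Finset ι}
    (hJI : Disjoint J I) :
    #{v : ι → α | (univ.filter fun i => P (v i)) = J ∧ (univ.filter fun i => Q (v i)) = I} =
      #{x | P x} ^ #J * #{x | Q x} ^ #I *
        #{x | ¬ P x ∧ ¬ Q x} ^ (Fintype.card ι - #J - #I) := by
  set S : ι → Finset α := fun i =>
    if i ∈ J then univ.filter P else if i ∈ I then univ.filter Q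
    else univ.filter fun x => ¬ P x ∧ ¬ Q x
  have hfiber : ({v : ι → α | (univ.filter fun i => P (v i)) = J ∧
      (univ.filter fun i => Q (v i)) = I} : Finset (ι → α)) = Fintype.piFinset S := by
    ext v
    simp only [mem_filter, mem_univ, true_and, Fintype.mem_piFinset, Finset.ext_iff,
      ← forall_and]
    refine forall_congr' fun i => ?_
    have := hPQ (v i)
    by_cases hJ : i ∈ J <;> by_cases hI : i ∈ I
    · exact absurd hI (disjoint_left.1 hJI hJ)
    all_goals simp only [S, hJ, hI, if_true, if_false, mem_filter, mem_univ, true_and, iff_true,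
      iff_false]
    all_goals tauto
  have hcard : ∀ i, #(S i) =
      (if i ∈ J then #{x | P x} else 1) * (if i ∈ I then #{x | Q x} else 1) *
        (if i ∈ (J ∪ I)ᶜ then #{x | ¬ P x ∧ ¬ Q x} else 1) := fun i => by
    by_cases hJ : i ∈ J <;> by_cases hI : i ∈ I
    · exact absurd hI (disjoint_left.1 hJI hJ)
    all_goals simp [S, hJ, hI]
  rw [hfiber, Fintype.card_piFinset, prod_congr rfl fun i _ => hcard i, prod_mul_distrib,
    prod_mul_distrib, prod_ite_mem, prod_ite_mem, prod_ite_mem, univ_inter, univ_inter,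
    univ_inter, prod_const, prod_const, prod_const, card_compl, card_union_of_disjoint hJI,
    Nat.sub_sub]

theorem sum_pi_apply_card_filter (hPQ : ∀ x, P x → ¬ Q x) (g : ℕ → ℕ → ℕ) :
    ∑ v : ι → α, g #{i | P (v i)} #{i | Q (v i)} =
      ∑ j ∈ range (Fintype.card ι + 1), ∑ i ∈ range (Fintype.card ι - j + 1),
        g j i * (Fintype.card ι).choose j * (Fintype.card ι - j).choose i *
          #{x | P x} ^ j * #{x | Q x} ^ i *
            #{x | ¬ P x ∧ ¬ Q x} ^ (Fintype.card ι - j - i) := by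
  set profile : (ι → α) → Finset ι × Finset ι :=
    fun v => (univ.filter fun i => P (v i), univ.filter fun i => Q (v i))
  have hprofile : ∀ v ∈ (univ : Finset (ι → α)),
      profile v ∈ ({p | Disjoint p.1 p.2} : Finset _) := fun v _ => by
    simpa [profile, Finset.disjoint_left] using fun i => hPQ (v i)
  have hpairs : ∀ p : Finset ι × Finset ι, p ∈ ({p | Disjoint p.1 p.2} : Finset _) ↔
      p.1 ∈ univ.powerset ∧ p.2 ∈ (univ \ p.1).powerset := fun p => by
    simp [subset_sdiff, disjoint_comm]
  rw [← sum_fiberwise_of_maps_to hprofile,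
    sum_finset_product _ univ.powerset (fun J => (univ \ J).powerset) hpairs]
  calc _ = ∑ J ∈ univ.powerset, ∑ I ∈ (univ \ J).powerset,
        g (#J) (#I) * (#{x | P x} ^ #J * #{x | Q x} ^ #I *
          #{x | ¬ P x ∧ ¬ Q x} ^ (Fintype.card ι - #J - #I)) := by
        refine sum_congr rfl fun J _ => sum_congr rfl fun I hI => ?_
        rw [filter_congr fun v _ => Prod.ext_iff, mul_comm, ← card_pi_filter_eq_and_filter_eq P Q
          hPQ (disjoint_comm.1 (subset_sdiff.1 (mem_powerset.1 hI)).2)]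
        refine sum_const_nat fun v hv => ?_
        obtain ⟨hvJ, hvI⟩ := (mem_filter.1 hv).2
        exact congr_arg₂ g (congr_arg card hvJ) (congr_arg card hvI)
    _ = _ := by
        refine (sum_powerset_sum_powerset_sdiff_apply_card univ fun j i => g j i *
          (#{x | P x} ^ j * #{x | Q x} ^ i *
            #{x | ¬ P x ∧ ¬ Q x} ^ (Fintype.card ι - j - i))).trans ?_
        rw [card_univ]
        exact sum_congr rfl fun j _ => sum_congr rfl fun i _ => by ring

end PiFilter

section DownEdges

variable {k d : ℕ}

def lowerAt (v : Fin d → Fin k) (j : Fin d) : Fin d → Fin k :=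
  Function.update v j ⟨v j - 1, (Nat.sub_le _ _).trans_lt (v j).isLt⟩

theorem downAdj_iff_eq_lowerAt {u v : Fin d → Fin k} {j : Fin d} :
    downAdj u v j ↔ 0 < (v j : ℕ) ∧ u = lowerAt v j := by
  constructor
  · rintro ⟨hj, hne⟩
    refine ⟨by omega, funext fun i => ?_⟩
    rcases eq_or_ne i j with rfl | hij
    · ext; simp only [lowerAt, Function.update_self]; omega
    · simp [lowerAt, hij, hne i hij]
  · rintro ⟨hpos, rfl⟩
    refine ⟨?_, fun i hij => by simp [lowerAt, hij]⟩
    simp only [lowerAt, Function.update_self]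
    omega

theorem downAdj.le {u v : Fin d → Fin k} {j : Fin d} (h : downAdj u v j) : u ≤ v := fun i => by
  rcases eq_or_ne i j with rfl | hij
  · exact Fin.le_def.2 (by have := h.1; omega)
  · exact (h.2 i hij).le

theorem downAdj.index_unique {u v : Fin d → Fin k} {j j' : Fin d} (h : downAdj u v j)
    (h' : downAdj u v j') : j = j' := by
  by_contra hne
  have := congr_arg Fin.val (h'.2 j hne)
  have := h.1
  omega

theorem downAdj.not_swap {u v : Fin d → Fin k} {j j' : Fin d} (h : downAdj u v j) :
    ¬ downAdj v u j' := fun h' => by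
  obtain rfl := le_antisymm h.le h'.le
  have := h.1
  omega

theorem eq_of_sym2_eq_of_downAdj {u v u' v' : Fin d → Fin k} {j j' : Fin d}
    (h : downAdj u v j) (h' : downAdj u' v' j') (he : s(u, v) = s(u', v')) : v = v' ∧ j = j' := by
  rcases Sym2.eq_iff.1 he with ⟨rfl, rfl⟩ | ⟨rfl, rfl⟩
  · exact ⟨rfl, h.index_unique h'⟩
  · exact (h.not_swap h').elim

theorem ncard_edgeSet_eq_sum_card_downAdj (R : (Fin d → Fin k) → Fin d → Prop)
    [∀ v, DecidablePred (R v)] (G : SimpleGraph (Fin d → Fin k))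
    (hG : ∀ u v, G.Adj u v ↔
      (∃ j, downAdj u v j ∧ R v j) ∨ (∃ j, downAdj v u j ∧ R u j)) :
    G.edgeSet.ncard = ∑ v, #{j | 0 < (v j : ℕ) ∧ R v j} := by
  classical
  rw [← coe_edgeFinset, Set.ncard_coe_finset, ← card_sigma]
  symm
  refine card_nbij (fun p => s(lowerAt p.1 p.2, p.1)) ?_ ?_ ?_
  · rintro ⟨v, j⟩ hp
    obtain ⟨hpos, hR⟩ := (mem_filter.1 (mem_sigma.1 hp).2).2
    exact mem_edgeFinset.2
      ((hG _ _).2 (Or.inl ⟨j, downAdj_iff_eq_lowerAt.2 ⟨hpos, rfl⟩, hR⟩))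
  · rintro ⟨v, j⟩ hp ⟨v', j'⟩ hp' he
    obtain ⟨hpos, -⟩ := (mem_filter.1 (mem_sigma.1 hp).2).2
    obtain ⟨hpos', -⟩ := (mem_filter.1 (mem_sigma.1 hp').2).2
    obtain ⟨rfl, rfl⟩ := eq_of_sym2_eq_of_downAdj (downAdj_iff_eq_lowerAt.2 ⟨hpos, rfl⟩)
      (downAdj_iff_eq_lowerAt.2 ⟨hpos', rfl⟩) he
    rfl
  · intro e he
    induction e using Sym2.ind with
    | _ u v =>
      rcases (hG u v).1 (mem_edgeFinset.1 he) with ⟨j, hj, hR⟩ | ⟨j, hj, hR⟩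
      · obtain ⟨hpos, rfl⟩ := downAdj_iff_eq_lowerAt.1 hj
        exact ⟨⟨v, j⟩, by simp [hpos, hR], rfl⟩
      · obtain ⟨hpos, rfl⟩ := downAdj_iff_eq_lowerAt.1 hj
        exact ⟨⟨u, j⟩, by simp [hpos, hR], Sym2.eq_swap⟩

end DownEdges

theorem card_filter_le_val {k a : ℕ} (ha : a < k) : #{x : Fin k | a ≤ (x : ℕ)} = k - a := by
  rw [show ({x : Fin k | a ≤ (x : ℕ)} : Finset _) = Ici ⟨a, ha⟩ by ext; simp [Fin.le_def],
    Fin.card_Ici]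

theorem card_filter_pos_and_val_lt {k a : ℕ} (ha : a < k) :
    #{x : Fin k | 0 < (x : ℕ) ∧ (x : ℕ) < a} = a - 1 := by
  rw [show ({x : Fin k | 0 < (x : ℕ) ∧ (x : ℕ) < a} : Finset _) =
      Ioo ⟨0, by omega⟩ ⟨a, ha⟩ by ext; simp [Fin.lt_def], Fin.card_Ioo]
  rfl

theorem card_filter_pos_and_lt_or_mem {ι : Type*} [Fintype ι] [DecidableEq ι] (f : ι → ℕ)
    {t : ℕ} {D : Finset ι} (hD : ∀ i ∈ D, t ≤ f i) (ht : 0 < t) :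
    #{i | 0 < f i ∧ (f i < t ∨ i ∈ D)} = #{i | 0 < f i ∧ f i < t} + #D := by
  have hdisj : Disjoint ({i | 0 < f i ∧ f i < t} : Finset ι) D :=
    disjoint_left.2 fun i hi hiD => by
      have := hD i hiD
      simp only [mem_filter, mem_univ, true_and] at hi
      omega
  rw [← card_union_of_disjoint hdisj]
  congr 1
  ext i
  by_cases hi : i ∈ D
  · have := hD i hi
    simp only [mem_filter, mem_union, mem_univ, hi, or_true, and_true, true_and, iff_true]
    omega
  · simp [hi]

theorem sum_add_min_mul_eq_sub (d m : ℕ) (hm : m - 1 ≤ d + 1) (w : ℕ → ℕ → ℕ) :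
    ∑ j ∈ range (d + 1), ∑ i ∈ range (d - j + 1), (i + min j (m - 1)) * w j i =
      ∑ j ∈ range (d + 1), ∑ i ∈ range (d - j + 1), (m - 1 + i) * w j i -
        ∑ j ∈ range (m - 1), ∑ i ∈ range (d - j + 1), (m - 1 - j) * w j i := by
  have hextend : ∑ j ∈ range (m - 1), ∑ i ∈ range (d - j + 1), (m - 1 - j) * w j i =
      ∑ j ∈ range (d + 1), ∑ i ∈ range (d - j + 1), (m - 1 - j) * w j i :=
    sum_subset (range_subset_range.2 hm) fun j _ hj => sum_eq_zero fun i _ => by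
      rw [Nat.sub_eq_zero_of_le (not_lt.1 (mem_range.not.1 hj)), zero_mul]
  rw [hextend, eq_comm, Nat.sub_eq_iff_eq_add (sum_le_sum fun j _ => sum_le_sum fun i _ => by
    gcongr; omega), ← sum_add_distrib]
  refine sum_congr rfl fun j _ => ?_
  rw [← sum_add_distrib]
  refine sum_congr rfl fun i _ => ?_
  rw [← add_mul]
  congr 1
  omega

theorem stmt_19_general (k d r m : ℕ) (hr : 2 ≤ r) (hk : r ≤ k) (hd : m ≤ d)
    (D : (Fin d → Fin k) → Finset (Fin d))
    (hD1 : ∀ v, ∀ j ∈ D v, r - 1 ≤ (v j : ℕ))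
    (hD2 : ∀ v, (D v).card =
      min (Finset.univ.filter (fun j => r - 1 ≤ (v j : ℕ))).card (m - 1))
    (G : SimpleGraph (Fin d → Fin k))
    (hG : ∀ u v, G.Adj u v ↔
      (∃ j, downAdj u v j ∧ ((v j : ℕ) < r - 1 ∨ j ∈ D v)) ∨
      (∃ j, downAdj v u j ∧ ((u j : ℕ) < r - 1 ∨ j ∈ D u))) :
    G.edgeSet.ncard =
      (∑ j ∈ Finset.range (d + 1), ∑ i ∈ Finset.range (d - j + 1),
        (m - 1 + i) * d.choose j * (d - j).choose i * (k - r + 1) ^ j * (r - 2) ^ i)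
      - (∑ j ∈ Finset.range (m - 1), ∑ i ∈ Finset.range (d - j + 1),
        (m - 1 - j) * d.choose j * (d - j).choose i * (k - r + 1) ^ j * (r - 2) ^ i) := by
  have hPQ : ∀ x : Fin k, r - 1 ≤ (x : ℕ) → ¬ (0 < (x : ℕ) ∧ (x : ℕ) < r - 1) := by
    omega
  have hzero :
      #{x : Fin k | ¬ r - 1 ≤ (x : ℕ) ∧ ¬ (0 < (x : ℕ) ∧ (x : ℕ) < r - 1)} = 1 := by
    rw [card_eq_one]
    exact ⟨⟨0, by omega⟩, by
      ext x
      simp only [mem_filter, mem_univ, true_and, mem_singleton, Fin.ext_iff]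
      omega⟩
  rw [ncard_edgeSet_eq_sum_card_downAdj _ G hG,
    sum_congr rfl fun v _ => by rw [card_filter_pos_and_lt_or_mem _ (hD1 v) (by omega), hD2 v]]
  refine (sum_pi_apply_card_filter _ _ hPQ fun j i => i + min j (m - 1)).trans ?_
  rw [card_filter_le_val (by omega), card_filter_pos_and_val_lt (by omega), hzero, Fintype.card_fin,
    show k - (r - 1) = k - r + 1 by omega]
  simp only [one_pow, mul_one, mul_assoc]
  exact sum_add_min_mul_eq_sub d m (by omega) _

theorem stmt_19 (k d r m : ℕ) (hr : 2 ≤ r) (hk : r ≤ k) (hm : 1 ≤ m) (hd : m ≤ d)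
    (D : (Fin d → Fin k) → Finset (Fin d))
    (hD1 : ∀ v, ∀ j ∈ D v, r - 1 ≤ (v j : ℕ))
    (hD2 : ∀ v, (D v).card =
      min (Finset.univ.filter (fun j => r - 1 ≤ (v j : ℕ))).card (m - 1))
    (G : SimpleGraph (Fin d → Fin k))
    (hG : ∀ u v, G.Adj u v ↔
      (∃ j, downAdj u v j ∧ ((v j : ℕ) < r - 1 ∨ j ∈ D v)) ∨
      (∃ j, downAdj v u j ∧ ((u j : ℕ) < r - 1 ∨ j ∈ D u))) :
    G.edgeSet.ncard =
      (∑ j ∈ Finset.range (d + 1), ∑ i ∈ Finset.range (d - j + 1),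
        (m - 1 + i) * d.choose j * (d - j).choose i * (k - r + 1) ^ j * (r - 2) ^ i)
      - (∑ j ∈ Finset.range (m - 1), ∑ i ∈ Finset.range (d - j + 1),
        (m - 1 - j) * d.choose j * (d - j).choose i * (k - r + 1) ^ j * (r - 2) ^ i) :=
  stmt_19_general k d r m hr hk hd D hD1 hD2 G hG
end
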